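/- Let Ω ⊂ ℝ^N be a bounded measurable set with |Ω| > 0 and let u be a bounded measurable function on Ω that is not a.e. zero. Then the map q ↦ ln(|Ω|^{1/q} / ‖u‖_{L^q(Ω)}) is differentiable on (1, ∞) with derivative equal to −K(q,u)/q², where K(q,u) = (∫_Ω |u|^q ln|u|^q dx)/‖u‖_q^q + ln(|Ω| ‖u‖_q^{-q}). -/

import Mathlib

open MeasureTheory Real

/-- `K(q,u) = (∫_Ω |u|^q ln|u|^q)/‖u‖_q^q + ln(|Ω| ‖u‖_q^{-q})`. -/
noncomputable def Kfun {N : ℕ} (Ω : Set (EuclideanSpace ℝ (Fin N)))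
    (q : ℝ) (u : EuclideanSpace ℝ (Fin N) → ℝ) : ℝ :=
  (∫ x in Ω, |u x| ^ q * Real.log (|u x| ^ q)) / (∫ x in Ω, |u x| ^ q)
    + Real.log ((volume Ω).toReal * (∫ x in Ω, |u x| ^ q)⁻¹)

/-!
Write `I(r) = ∫_Ω |u|^r`, so that the function is `(ln |Ω| - ln I(r)) / r`. Since `u` is bounded
and `Ω` has finite measure, `∂_r |u|^r = |u|^r ln|u|` is dominated uniformly for `r` near `q > 0`
(near `|u| = 0` by `|t^r ln t| ≤ 1/r`), so one may differentiate under the integral sign: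
`I'(q) = ∫_Ω |u|^q ln|u|`. The quotient rule then gives `-K(q,u)/q²`.
-/

lemma log_rpow_of_nonneg {t : ℝ} (ht : 0 ≤ t) (q : ℝ) : log (t ^ q) = q * log t := by
  rcases ht.eq_or_lt with rfl | ht
  · rcases eq_or_ne q 0 with rfl | hq
    · simp
    · simp [zero_rpow hq]
  · exact log_rpow ht q

lemma hasDerivAt_const_rpow_of_nonneg {a r : ℝ} (ha : 0 ≤ a) (hr : 0 < r) :
    HasDerivAt (fun s => a ^ s) (a ^ r * log a) r := by
  rcases ha.eq_or_lt with rfl | ha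
  · have hzero : (fun s : ℝ => (0 : ℝ) ^ s) =ᶠ[nhds r] fun _ => 0 := by
      filter_upwards [eventually_gt_nhds hr] with s hs using zero_rpow hs.ne'
    simpa using (hasDerivAt_const r (0 : ℝ)).congr_of_eventuallyEq hzero
  · exact (hasStrictDerivAt_const_rpow ha r).hasDerivAt

lemma abs_rpow_mul_log_le_of_le_one {t r : ℝ} (ht : 0 ≤ t) (ht1 : t ≤ 1) (hr : 0 < r) :
    |t ^ r * log t| ≤ 1 / r := by
  rcases ht.eq_or_lt with rfl | ht
  · simp [zero_rpow hr.ne', hr.le]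
  · rw [mul_comm]
    exact (abs_log_mul_self_rpow_lt t r ht ht1 hr).le

lemma abs_rpow_mul_log_le {t r r₀ r₁ C : ℝ} (ht : 0 ≤ t) (htC : t ≤ C) (hr₀ : 0 < r₀)
    (hr₀r : r₀ ≤ r) (hrr₁ : r ≤ r₁) :
    |t ^ r * log t| ≤ 1 / r₀ + max C 1 ^ r₁ * log (max C 1) := by
  have hC : t ≤ max C 1 := le_max_of_le_left htC
  have hlogC : 0 ≤ log (max C 1) := log_nonneg (le_max_right C 1)
  rcases le_or_gt t 1 with ht1 | ht1
  · calc |t ^ r * log t| ≤ 1 / r := abs_rpow_mul_log_le_of_le_one ht ht1 (hr₀.trans_le hr₀r)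
      _ ≤ 1 / r₀ := one_div_le_one_div_of_le hr₀ hr₀r
      _ ≤ 1 / r₀ + max C 1 ^ r₁ * log (max C 1) :=
          le_add_of_nonneg_right (mul_nonneg (rpow_nonneg (ht.trans hC) _) hlogC)
  · have hlogt : 0 ≤ log t := log_nonneg ht1.le
    calc |t ^ r * log t| = t ^ r * log t := abs_of_nonneg (mul_nonneg (rpow_nonneg ht _) hlogt)
      _ ≤ max C 1 ^ r₁ * log (max C 1) := by
          gcongr
          exact (rpow_le_rpow_of_exponent_le ht1.le hrr₁).trans
            (rpow_le_rpow ht hC (hr₀.le.trans (hr₀r.trans hrr₁)))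
      _ ≤ 1 / r₀ + max C 1 ^ r₁ * log (max C 1) := le_add_of_nonneg_left (by positivity)

section IntegralRpow

variable {α : Type*} [MeasurableSpace α] {μ : Measure α} {f : α → ℝ}

lemma integrable_abs_rpow_of_bounded [IsFiniteMeasure μ] {C r : ℝ} (hf : AEMeasurable f μ)
    (hC : ∀ᵐ x ∂μ, |f x| ≤ C) (hr : 0 ≤ r) : Integrable (fun x => |f x| ^ r) μ := by
  refine Integrable.mono' (integrable_const (max C 1 ^ r))
    (hf.abs.pow_const r).aestronglyMeasurable ?_
  filter_upwards [hC] with x hx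
  rw [norm_eq_abs, abs_of_nonneg (rpow_nonneg (abs_nonneg _) _)]
  exact rpow_le_rpow (abs_nonneg _) (le_max_of_le_left hx) hr

lemma integral_abs_rpow_pos {r : ℝ} (hr : 0 < r) (hint : Integrable (fun x => |f x| ^ r) μ)
    (hne : ¬ ∀ᵐ x ∂μ, f x = 0) : 0 < ∫ x, |f x| ^ r ∂μ := by
  have hsupp : Function.support (fun x => |f x| ^ r) = Function.support f := by
    ext x
    simp [rpow_eq_zero_iff_of_nonneg (abs_nonneg _), hr.ne']
  rw [integral_pos_iff_support_of_nonneg_ae (ae_of_all _ fun x => by positivity) hint, hsupp,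
    pos_iff_ne_zero]
  exact fun h => hne (ae_iff.mpr h)

lemma hasDerivAt_integral_abs_rpow [IsFiniteMeasure μ] {C q : ℝ} (hf : AEMeasurable f μ)
    (hC : ∀ᵐ x ∂μ, |f x| ≤ C) (hq : 0 < q) :
    HasDerivAt (fun r => ∫ x, |f x| ^ r ∂μ) (∫ x, |f x| ^ q * log |f x| ∂μ) q := by
  have hball : ∀ r ∈ Metric.ball q (q / 2), q / 2 ≤ r ∧ r ≤ 3 * q / 2 ∧ 0 < r := by
    intro r hr
    rw [Metric.mem_ball, dist_eq, abs_lt] at hr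
    exact ⟨by linarith, by linarith, by linarith⟩
  refine (hasDerivAt_integral_of_dominated_loc_of_deriv_le
    (F := fun r x => |f x| ^ r) (F' := fun r x => |f x| ^ r * log |f x|)
    (bound := fun _ => 1 / (q / 2) + max C 1 ^ (3 * q / 2) * log (max C 1))
    (Metric.ball_mem_nhds q (half_pos hq))
    (Filter.Eventually.of_forall fun r => (hf.abs.pow_const r).aestronglyMeasurable)
    (integrable_abs_rpow_of_bounded hf hC hq.le)
    ((hf.abs.pow_const q).mul (measurable_log.comp_aemeasurable hf.abs)).aestronglyMeasurable
    ?_ (integrable_const _) ?_).2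
  · filter_upwards [hC] with x hx r hr
    obtain ⟨hlo, hhi, -⟩ := hball r hr
    exact abs_rpow_mul_log_le (abs_nonneg _) hx (half_pos hq) hlo hhi
  · filter_upwards with x r hr
    exact hasDerivAt_const_rpow_of_nonneg (abs_nonneg _) (hball r hr).2.2

end IntegralRpow

lemma Kfun_eq {N : ℕ} {Ω : Set (EuclideanSpace ℝ (Fin N))}
    {u : EuclideanSpace ℝ (Fin N) → ℝ} {q : ℝ} (hΩ : 0 < (volume Ω).toReal)
    (hI : 0 < ∫ x in Ω, |u x| ^ q) :
    Kfun Ω q u = q * (∫ x in Ω, |u x| ^ q * log |u x|) / (∫ x in Ω, |u x| ^ q)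
      + log (volume Ω).toReal - log (∫ x in Ω, |u x| ^ q) := by
  simp only [Kfun, log_rpow_of_nonneg (abs_nonneg _), mul_left_comm _ q, integral_const_mul,
    log_mul hΩ.ne' (inv_ne_zero hI.ne'), log_inv]
  ring

theorem stmt2_general {N : ℕ} (Ω : Set (EuclideanSpace ℝ (Fin N)))
    (hΩpos : 0 < (volume Ω).toReal)
    (u : EuclideanSpace ℝ (Fin N) → ℝ) (hu : Measurable u)
    (hbdd : ∃ C : ℝ, ∀ x, |u x| ≤ C)
    (hne : ¬ (∀ᵐ x ∂(volume.restrict Ω), u x = 0)) :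
    ∀ q ∈ Set.Ioi (1 : ℝ),
      HasDerivAt
        (fun r : ℝ => Real.log ((volume Ω).toReal ^ (1 / r) / (∫ x in Ω, |u x| ^ r) ^ (1 / r)))
        (-(Kfun Ω q u) / q ^ 2) q := by
  intro q hq
  obtain ⟨C, hC⟩ := hbdd
  have hq₀ : 0 < q := zero_lt_one.trans hq
  have : IsFiniteMeasure (volume.restrict Ω) :=
    ⟨by simpa using (ENNReal.toReal_pos_iff.mp hΩpos).2⟩
  have hI : ∀ r : ℝ, 0 < r → 0 < ∫ x in Ω, |u x| ^ r := fun r hr =>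
    integral_abs_rpow_pos hr (integrable_abs_rpow_of_bounded hu.aemeasurable (ae_of_all _ hC)
      hr.le) hne
  have hlog_eq :
      (fun r : ℝ => log ((volume Ω).toReal ^ (1 / r) / (∫ x in Ω, |u x| ^ r) ^ (1 / r)))
        =ᶠ[nhds q] fun r => (log (volume Ω).toReal - log (∫ x in Ω, |u x| ^ r)) / r := by
    filter_upwards [eventually_gt_nhds hq₀] with r hr
    rw [← div_rpow hΩpos.le (hI r hr).le, log_rpow (div_pos hΩpos (hI r hr)),
      log_div hΩpos.ne' (hI r hr).ne']
    ring
  have hlogI := (hasDerivAt_integral_abs_rpow hu.aemeasurable (ae_of_all _ hC) hq₀).log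
    (hI q hq₀).ne'
  have hderiv :=
    ((hasDerivAt_const q (log (volume Ω).toReal)).sub hlogI).div (hasDerivAt_id q) hq₀.ne'
  refine (hderiv.congr_of_eventuallyEq hlog_eq).congr_deriv ?_
  rw [Kfun_eq hΩpos (hI q hq₀)]
  simp only [id, Pi.sub_apply]
  field_simp
  ring

/-- for a bounded measurable set `Ω` of positive measure and a bounded
measurable `u` not a.e. zero on `Ω`, the map `q ↦ ln(|Ω|^{1/q} / ‖u‖_{L^q(Ω)})` is
differentiable on `(1,∞)` with derivative `−K(q,u)/q²`. -/
theorem stmt2 {N : ℕ} (Ω : Set (EuclideanSpace ℝ (Fin N)))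
    (hΩm : MeasurableSet Ω) (hΩb : Bornology.IsBounded Ω)
    (hΩpos : 0 < (volume Ω).toReal)
    (u : EuclideanSpace ℝ (Fin N) → ℝ) (hu : Measurable u)
    (hbdd : ∃ C : ℝ, ∀ x, |u x| ≤ C)
    (hne : ¬ (∀ᵐ x ∂(volume.restrict Ω), u x = 0)) :
    ∀ q ∈ Set.Ioi (1 : ℝ),
      HasDerivAt
        (fun r : ℝ => Real.log ((volume Ω).toReal ^ (1 / r) / (∫ x in Ω, |u x| ^ r) ^ (1 / r)))
        (-(Kfun Ω q u) / q ^ 2) q :=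
  stmt2_general Ω hΩpos u hu hbdd hne
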